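/- arXiv:2012.04730 — 2 statements merged into one kernel-verified Lean document; each statement's English description precedes it below -/
import Mathlib

section
/- If r is the max Tucker rank (resp. the submax Tucker rank) and X is any nonzero tensor, then there is a subtensor Y ∈ ℝ^{J₁×⋯×J_N} of X such that r(X) = r(Y) = J_n for some mode n. -/
open scoped BigOperators

/-- An order-`N` real tensor with mode sizes `I n`. -/
abbrev Tensor (N : ℕ) (I : Fin N → ℕ) : Type :=
  ((n : Fin N) → Fin (I n)) → ℝ

/-- A rank-one tensor is an outer product of nonzero vectors. -/
def IsRankOne {N : ℕ} {I : Fin N → ℕ} (X : Tensor N I) : Prop :=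
  ∃ a : (n : Fin N) → Fin (I n) → ℝ, (∀ n, a n ≠ 0) ∧ ∀ i, X i = ∏ n, a n (i n)

/-- The order-`N` identity tensor `I_{M,N}`: ones on the diagonal, zeros elsewhere. -/
def idTensor (M N : ℕ) : Tensor N (fun _ => M) :=
  fun i => if ∀ n m : Fin N, i n = i m then 1 else 0

/-- The matrix associated to a tensor of shape `I₁ × I₂ × 1 × ⋯ × 1`. -/
def assocMatrix {N : ℕ} {I : Fin N → ℕ} (h2 : 2 ≤ N)
    (h1 : ∀ n : Fin N, 2 ≤ n.val → I n = 1) (X : Tensor N I) :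
    Matrix (Fin (I ⟨0, by omega⟩)) (Fin (I ⟨1, by omega⟩)) ℝ :=
  Matrix.of fun p q =>
    X (fun m =>
      if e0 : m = ⟨0, by omega⟩ then Fin.cast (congrArg I e0.symm) p
      else if e1 : m = ⟨1, by omega⟩ then Fin.cast (congrArg I e1.symm) q
      else Fin.cast (h1 m (by
        have v0 : m.val ≠ 0 := fun hh => e0 (Fin.ext hh)
        have v1 : m.val ≠ 1 := fun hh => e1 (Fin.ext hh)
        omega)).symm 0)

/-- Permutation of the modes of a tensor. -/
def permute {N : ℕ} (I : Fin N → ℕ) (π : Equiv.Perm (Fin N)) (X : Tensor N I) :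
    Tensor N (fun m => I (π m)) :=
  fun i => X (fun m => Fin.cast (congrArg I (π.apply_symm_apply m)) (i (π.symm m)))

/-- `Y` is a subtensor of `X` : it is obtained by selecting, in each mode, an
increasing subset of the indices. -/
def IsSubtensor {N : ℕ} {J I : Fin N → ℕ} (Y : Tensor N J) (X : Tensor N I) : Prop :=
  ∃ f : (n : Fin N) → Fin (J n) → Fin (I n),
    (∀ n, StrictMono (f n)) ∧ ∀ i, Y i = X (fun n => f n (i n))

/-- The mode-`n` unfolding of a tensor, as a matrix whose columns are the
mode-`n` fibers. -/
def modeUnfold {N : ℕ} {I : Fin N → ℕ} (X : Tensor N I) (n : Fin N) :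
    Matrix (Fin (I n)) ((m : {m : Fin N // m ≠ n}) → Fin (I m.1)) ℝ :=
  Matrix.of fun p j =>
    X (fun m => if h : m = n then Fin.cast (congrArg I h.symm) p else j ⟨m, h⟩)

/-- The mode-`n` matrix product `X ×ₙ A`. -/
def modeMul {N : ℕ} {I : Fin N → ℕ} (X : Tensor N I) (n : Fin N) {J : ℕ}
    (A : Matrix (Fin J) (Fin (I n)) ℝ) : Tensor N (Function.update I n J) :=
  fun i => ∑ t : Fin (I n),
    A (Fin.cast (by simp) (i n)) t *
      X (fun m =>
        if h : m = n then Fin.cast (congrArg I h.symm) t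
        else Fin.cast (by rw [Function.update_of_ne h]) (i m))

/-- Appending a trailing mode of dimension 1 to a tensor. -/
def snocOne {N : ℕ} {I : Fin N → ℕ} (X : Tensor N I) :
    Tensor (N + 1) (Fin.snoc I 1) :=
  fun i => X (fun m => Fin.cast (by simp) (i m.castSucc))

/-- The matrix associated to a tensor all of whose modes other than `n₁, n₂`
have dimension 1 (a "submatrix" shape). -/
def twoModeMatrix {N : ℕ} {J : Fin N → ℕ} (Z : Tensor N J) (n₁ n₂ : Fin N)
    (h1 : ∀ m, m ≠ n₁ → m ≠ n₂ → J m = 1) : Matrix (Fin (J n₁)) (Fin (J n₂)) ℝ :=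
  Matrix.of fun p q =>
    Z (fun m =>
      if h : m = n₁ then Fin.cast (congrArg J h.symm) p
      else if h' : m = n₂ then Fin.cast (congrArg J h'.symm) q
      else Fin.cast (h1 m h h').symm 0)

/-- A rank function assigns a natural number to every real tensor. -/
def RankFun : Type :=
  ∀ (N : ℕ) (I : Fin N → ℕ), Tensor N I → ℕ

/-- The axioms (QZC1)–(QZC6) of Qi, Zhang and Chen for a tensor rank function. -/
structure IsQZCRankFn (r : RankFun) : Prop where
  zero_iff : ∀ (N : ℕ), 0 < N → ∀ (I : Fin N → ℕ) (X : Tensor N I),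
    r N I X = 0 ↔ X = 0
  one_iff : ∀ (N : ℕ), 0 < N → ∀ (I : Fin N → ℕ) (X : Tensor N I),
    r N I X = 1 ↔ IsRankOne X
  id_eq : ∀ (M N : ℕ), 2 ≤ N → r N (fun _ => M) (idTensor M N) = M
  matrix_eq : ∀ (N : ℕ) (h2 : 2 ≤ N) (I : Fin N → ℕ)
    (h1 : ∀ n : Fin N, 2 ≤ n.val → I n = 1) (X : Tensor N I),
    r N I X = (assocMatrix h2 h1 X).rank
  smul_eq : ∀ (N : ℕ), 0 < N → ∀ (I : Fin N → ℕ) (α : ℝ), α ≠ 0 →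
    ∀ (X : Tensor N I), r N I (α • X) = r N I X
  perm_eq : ∀ (N : ℕ), 0 < N → ∀ (I : Fin N → ℕ) (π : Equiv.Perm (Fin N))
    (X : Tensor N I), r N (fun m => I (π m)) (permute I π X) = r N I X
  subtensor_le : ∀ (N : ℕ), 0 < N → ∀ (I J : Fin N → ℕ) (X : Tensor N I)
    (Y : Tensor N J), IsSubtensor Y X → r N J Y ≤ r N I X

/-- The max Tucker rank: the largest rank of a mode-`n` unfolding. -/
noncomputable def maxTuckerRank : RankFun := fun N _I X =>
  Finset.univ.sup fun n : Fin N => (modeUnfold X n).rank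

/-- The submax Tucker rank: the second-largest (with multiplicity) rank of a
mode unfolding, and the unfolding rank itself when `N = 1`. -/
noncomputable def submaxRank : RankFun := fun N _I X =>
  let s : Multiset ℕ := (Finset.univ : Finset (Fin N)).val.map fun n => (modeUnfold X n).rank
  if N ≤ 1 then s.sup else (s.erase s.sup).sup

/-!
Both ranks are the rank of some unfolding `X_(n)`. Keep, in mode `n`, only `rank X_(n)` slices
of `X` whose vectorizations span the row space of `X_(n)`; call the result `Y`. Then `Y_(n)`
has the same row space as `X_(n)`, and for `m ≠ n` every slice of `X` is a linear combination
of the kept ones, so every mode-`m` fiber of `X` is a combination of mode-`m` fibers of `Y`.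
Hence all unfolding ranks of `Y` and `X` agree, and `r Y = r X = rank X_(n) = J n`.
-/

open Function Set Submodule

namespace Matrix

variable {m n m₀ n₀ K : Type*} [Field K] [Fintype n] [Fintype n₀]

theorem rank_submatrix_eq_rank_submatrix_id_of_surjective (A : Matrix m n K) (r : m₀ → m)
    {c : n₀ → n} (hc : Surjective c) : (A.submatrix r c).rank = (A.submatrix r id).rank := by
  refine le_antisymm ((A.submatrix r id).rank_submatrix_le id c) ?_
  have h := (A.submatrix r c).rank_submatrix_le id (surjInv hc)
  rwa [submatrix_submatrix, comp_id, (rightInverse_surjInv hc).comp_eq_id] at h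

theorem rank_submatrix_eq_of_span_row_eq [Finite m] [Finite m₀] (A : Matrix m n K)
    {r : m₀ → m} {c : n₀ → n}
    (hr : span K (range fun q => A.row (r q)) = span K (range A.row)) (hc : Surjective c) :
    (A.submatrix r c).rank = A.rank := by
  rw [rank_submatrix_eq_rank_submatrix_id_of_surjective A r hc, rank_eq_finrank_span_row,
    rank_eq_finrank_span_row, ← hr]
  rfl

theorem rank_submatrix_eq_of_span_col_eq [Fintype m] [Fintype m₀] (A : Matrix m n K)
    {r : m₀ → m} {c : n₀ → n}
    (hc : span K (range fun j => A.col (c j)) = span K (range A.col)) (hr : Surjective r) :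
    (A.submatrix r c).rank = A.rank := by
  rw [← rank_transpose, transpose_submatrix, ← A.rank_transpose]
  exact Aᵀ.rank_submatrix_eq_of_span_row_eq hc hr

theorem exists_strictMono_span_row_eq {a : ℕ} (A : Matrix (Fin a) n K) :
    ∃ f : Fin A.rank → Fin a, StrictMono f ∧
      span K (range fun q => A.row (f q)) = span K (range A.row) := by
  classical
  obtain ⟨b, -, -, hspan, hli⟩ :=
    exists_linearIndepOn_extension (linearIndepOn_empty K A.row) (empty_subset univ)
  have hb : span K (A.row '' b) = span K (range A.row) :=
    le_antisymm (span_mono (image_subset_range _ b))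
      (by rw [← image_univ]; exact span_le.2 hspan)
  have hcard : b.toFinset.card = A.rank := by
    rw [rank_eq_finrank_span_row, ← hb, image_eq_range, finrank_span_eq_card hli,
      toFinset_card]
  refine ⟨b.toFinset.orderEmbOfFin hcard, (b.toFinset.orderEmbOfFin hcard).strictMono, ?_⟩
  rw [range_comp', Finset.range_orderEmbOfFin, coe_toFinset, hb]

end Matrix

theorem surjective_restrict_ne {ι : Type*} [DecidableEq ι] {β : ι → Type*} (a : ι)
    [Nonempty (β a)] : Surjective fun (f : ∀ x, β x) (x : {x // x ≠ a}) => f x.1 := by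
  intro g
  refine ⟨fun x => if h : x = a then h ▸ Classical.arbitrary (β a) else g ⟨x, h⟩, ?_⟩
  funext x
  simp [x.2]

theorem Multiset.sup_mem_of_ne_zero {α : Type*} [LinearOrder α] [OrderBot α]
    {s : Multiset α} (hs : s ≠ 0) : s.sup ∈ s := by
  classical
  obtain ⟨a, ha, hsup⟩ := s.toFinset.exists_mem_eq_sup (by simpa using hs) id
  rw [Finset.sup_def, Multiset.map_id, Multiset.toFinset_val, Multiset.sup_dedup] at hsup
  simpa [hsup] using ha

section

variable {N : ℕ} {I J : Fin N → ℕ}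

theorem modeUnfold_comp (X : Tensor N I) (g : ∀ k, Fin (J k) → Fin (I k)) (m : Fin N) :
    modeUnfold (fun i => X fun k => g k (i k)) m =
      (modeUnfold X m).submatrix (g m) (fun j k => g k.1 (j k)) := by
  ext p j
  simp only [modeUnfold, Matrix.of_apply, Matrix.submatrix_apply]
  congr 1
  funext k
  split_ifs with h
  · subst h; rfl
  · rfl

theorem modeUnfold_apply_update (X : Tensor N I) (m : Fin N) (i : ∀ k, Fin (I k))
    (p : Fin (I m)) : modeUnfold X m p (fun k => i k.1) = X (update i m p) := by
  simp only [modeUnfold, Matrix.of_apply]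
  congr 1
  funext k
  split_ifs with h
  · subst h; simp
  · simp [h]

theorem modeUnfold_col_restrict (X : Tensor N I) (m : Fin N) (i : ∀ k, Fin (I k)) :
    (modeUnfold X m).col (fun k => i k.1) = fun p => X (update i m p) :=
  funext (modeUnfold_apply_update X m i)

theorem fiber_mem_span_update_of_span_row_eq (X : Tensor N I) {m n : Fin N} (hmn : m ≠ n)
    {R : ℕ} (v : Fin R → Fin (I n))
    (hv : span ℝ (range fun q => (modeUnfold X n).row (v q)) =
      span ℝ (range (modeUnfold X n).row))
    (i : ∀ k, Fin (I k)) :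
    (fun p => X (update i m p)) ∈
      span ℝ (range fun q p => X (update (update i n (v q)) m p)) := by
  have hrow : (modeUnfold X n).row (i n) ∈ span ℝ (range fun q => (modeUnfold X n).row (v q)) :=
    hv ▸ subset_span (mem_range_self _)
  obtain ⟨c, hc⟩ := (mem_span_range_iff_exists_fun ℝ).1 hrow
  refine (mem_span_range_iff_exists_fun ℝ).2 ⟨c, funext fun p => ?_⟩
  have hcp := congrFun hc fun k => update i m p k.1
  simp only [Finset.sum_apply, Pi.smul_apply, smul_eq_mul, Matrix.row,
    modeUnfold_apply_update] at hcp
  simp only [Finset.sum_apply, Pi.smul_apply, smul_eq_mul]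
  simpa only [update_comm hmn, update_of_ne hmn.symm, update_eq_self] using hcp

theorem rank_modeUnfold_comp_eq (X : Tensor N I) (g : ∀ k, Fin (J k) → Fin (I k)) {n : Fin N}
    (hg : ∀ k ≠ n, Surjective (g k))
    (hspan : span ℝ (range fun q => (modeUnfold X n).row (g n q)) =
      span ℝ (range (modeUnfold X n).row)) (m : Fin N) :
    (modeUnfold (fun i => X fun k => g k (i k)) m).rank = (modeUnfold X m).rank := by
  rw [modeUnfold_comp]
  rcases eq_or_ne m n with rfl | hmn
  · exact (modeUnfold X m).rank_submatrix_eq_of_span_row_eq hspan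
      (Surjective.piMap fun k => hg k.1 k.2)
  refine (modeUnfold X m).rank_submatrix_eq_of_span_col_eq
    (le_antisymm (span_mono (range_comp_subset_range _ _)) (span_le.2 ?_)) (hg m hmn)
  rintro _ ⟨j, rfl⟩
  cases isEmpty_or_nonempty (Fin (I m))
  · rw [Subsingleton.elim ((modeUnfold X m).col j) 0]
    exact zero_mem _
  obtain ⟨i, rfl⟩ := surjective_restrict_ne (β := fun k => Fin (I k)) m j
  rw [modeUnfold_col_restrict]
  refine span_le.2 ?_ (fiber_mem_span_update_of_span_row_eq X hmn (g n) hspan i)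
  rintro _ ⟨q, rfl⟩
  have hmem : ∀ k : {k // k ≠ m}, update i n (g n q) k.1 ∈ range (g k.1) := by
    rintro ⟨k, -⟩
    rcases eq_or_ne k n with rfl | hkn
    · simp
    · rw [update_of_ne hkn]
      exact hg k hkn _
  choose j hj using hmem
  refine subset_span ⟨j, ?_⟩
  simp only [hj, modeUnfold_col_restrict]

theorem exists_update_shape_of_strictMono (n : Fin N) {R : ℕ} {f : Fin R → Fin (I n)}
    (hf : StrictMono f) :
    ∃ g : ∀ k, Fin (update I n R k) → Fin (I k), (∀ k, StrictMono (g k)) ∧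
      (∀ k ≠ n, Surjective (g k)) ∧ range (g n) = range f := by
  refine ⟨fun k => if h : k = n then
      Fin.castOrderIso (congrArg I h.symm) ∘ f ∘ Fin.castOrderIso (by rw [h, update_self])
    else Fin.castOrderIso (update_of_ne h R I), fun k => ?_, fun k hk => ?_, ?_⟩
  · rcases eq_or_ne k n with rfl | hk
    · simpa only [dite_true] using
        (Fin.castOrderIso _).strictMono.comp (hf.comp (Fin.castOrderIso _).strictMono)
    · simpa only [hk, dite_false] using (Fin.castOrderIso _).strictMono
  · simpa only [hk, dite_false] using (Fin.castOrderIso _).surjective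
  · simp [range_comp]

theorem exists_isSubtensor_rank_modeUnfold_eq (X : Tensor N I) (n : Fin N) :
    ∃ (J : Fin N → ℕ) (Y : Tensor N J), IsSubtensor Y X ∧ J n = (modeUnfold X n).rank ∧
      ∀ m, (modeUnfold Y m).rank = (modeUnfold X m).rank := by
  obtain ⟨f, hf, hspan⟩ := (modeUnfold X n).exists_strictMono_span_row_eq
  obtain ⟨g, hmono, hsurj, hrange⟩ := exists_update_shape_of_strictMono n hf
  refine ⟨_, fun i => X fun k => g k (i k), ⟨g, hmono, fun _ => rfl⟩, update_self ..,
    rank_modeUnfold_comp_eq X g hsurj ?_⟩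
  rwa [range_comp', hrange, ← range_comp']

theorem maxTuckerRank_congr {X : Tensor N I} {Y : Tensor N J}
    (h : ∀ m, (modeUnfold Y m).rank = (modeUnfold X m).rank) :
    maxTuckerRank N J Y = maxTuckerRank N I X :=
  Finset.sup_congr rfl fun m _ => h m

theorem submaxRank_congr {X : Tensor N I} {Y : Tensor N J}
    (h : ∀ m, (modeUnfold Y m).rank = (modeUnfold X m).rank) :
    submaxRank N J Y = submaxRank N I X := by
  simp only [submaxRank, h]

theorem exists_rank_modeUnfold_eq_maxTuckerRank (hN : 0 < N) (X : Tensor N I) :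
    ∃ n, (modeUnfold X n).rank = maxTuckerRank N I X := by
  obtain ⟨n, -, hn⟩ := Finset.univ.exists_mem_eq_sup ⟨⟨0, hN⟩, Finset.mem_univ _⟩
    fun m => (modeUnfold X m).rank
  exact ⟨n, hn.symm⟩

theorem exists_rank_modeUnfold_eq_submaxRank (hN : 0 < N) (X : Tensor N I) :
    ∃ n, (modeUnfold X n).rank = submaxRank N I X := by
  set s : Multiset ℕ := Finset.univ.val.map fun m : Fin N => (modeUnfold X m).rank
  have hcard : s.card = N := by simp [s]
  have hs0 : s ≠ 0 := by
    rw [← Multiset.card_pos, hcard]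
    exact hN
  suffices hmem : submaxRank N I X ∈ s by
    simpa [s, eq_comm] using hmem
  by_cases hN1 : N ≤ 1
  · simpa only [submaxRank, if_pos hN1] using Multiset.sup_mem_of_ne_zero hs0
  · have herase : s.erase s.sup ≠ 0 := by
      intro h
      have := Multiset.card_erase_of_mem (Multiset.sup_mem_of_ne_zero hs0)
      rw [h, hcard] at this
      simp at this
      omega
    simpa only [submaxRank, if_neg hN1] using
      Multiset.mem_of_mem_erase (Multiset.sup_mem_of_ne_zero herase)

theorem exists_isSubtensor_eq_of_rank_modeUnfold_eq (r : RankFun) (X : Tensor N I)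
    (hr : ∀ (J : Fin N → ℕ) (Y : Tensor N J),
      (∀ m, (modeUnfold Y m).rank = (modeUnfold X m).rank) → r N J Y = r N I X)
    {n : Fin N} (hn : (modeUnfold X n).rank = r N I X) :
    ∃ (J : Fin N → ℕ) (Y : Tensor N J), IsSubtensor Y X ∧
      ∃ n : Fin N, r N I X = r N J Y ∧ r N J Y = J n := by
  obtain ⟨J, Y, hYX, hJn, hranks⟩ := exists_isSubtensor_rank_modeUnfold_eq X n
  have hrY := hr J Y hranks
  exact ⟨J, Y, hYX, n, hrY.symm, by rw [hrY, hJn, hn]⟩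

end

theorem tucker_rank_attained_on_subtensor_general (r : RankFun)
    (hr : r = maxTuckerRank ∨ r = submaxRank)
    (N : ℕ) (hN : 0 < N) (I : Fin N → ℕ) (X : Tensor N I) :
    ∃ (J : Fin N → ℕ) (Y : Tensor N J), IsSubtensor Y X ∧
      ∃ n : Fin N, r N I X = r N J Y ∧ r N J Y = J n := by
  rcases hr with rfl | rfl
  · obtain ⟨n, hn⟩ := exists_rank_modeUnfold_eq_maxTuckerRank hN X
    exact exists_isSubtensor_eq_of_rank_modeUnfold_eq _ X (fun _ _ => maxTuckerRank_congr) hn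
  · obtain ⟨n, hn⟩ := exists_rank_modeUnfold_eq_submaxRank hN X
    exact exists_isSubtensor_eq_of_rank_modeUnfold_eq _ X (fun _ _ => submaxRank_congr) hn

/-- For the max Tucker rank and for the submax Tucker rank: any nonzero tensor
`X` has a subtensor `Y` with `r X = r Y = Jₙ` for some mode `n`, where `J` is
the shape of `Y`. -/
theorem tucker_rank_attained_on_subtensor (r : RankFun)
    (hr : r = maxTuckerRank ∨ r = submaxRank)
    (N : ℕ) (hN : 0 < N) (I : Fin N → ℕ) (X : Tensor N I) (hX : X ≠ 0) :
    ∃ (J : Fin N → ℕ) (Y : Tensor N J), IsSubtensor Y X ∧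
      ∃ n : Fin N, r N I X = r N J Y ∧ r N J Y = J n :=
  tucker_rank_attained_on_subtensor_general r hr N hN I X
end

section
/- Define r on real tensors by: r(X)=0 if X=0; r(X)=1 if X has rank one; if X ∈ ℝ^{I₁×⋯×I_N} is nonzero, not rank one, and exactly two modes n₁ < n₂ have I_{n₁}, I_{n₂} > 1, then r(X) = rank of the associated I_{n₁}×I_{n₂} matrix; if at least three modes have dimension > 1, then r(X) = max{I₁,…,I_N}. Then r is a QZC rank function. -/
open scoped BigOperators

/-!
A nonzero tensor that is not rank one has at least two modes of dimension `> 1`. If it has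
exactly two, all other indices range over a single value, so the tensor is its two-mode matrix
in disguise, and it is rank one exactly when that matrix has rank one. Hence `r` is the matrix
rank on every tensor supported on two modes, which gives the matrix axiom and reduces scaling,
permuting modes and passing to subtensors to scaling, reindexing and taking submatrices. With
three or more nontrivial modes `r` is the largest dimension, and these operations preserve (for
subtensors: shrink) both the number of nontrivial modes and the largest dimension; a matrix
rank never exceeds the dimensions. In every case `r X ≥ 2`
for `X` nonzero and not rank one, which characterises `r X = 0` and `r X = 1`.
-/

namespace Matrix

variable {m n K : Type*} [Fintype m] [Fintype n] [Field K]

theorem rank_eq_zero_iff {A : Matrix m n K} : A.rank = 0 ↔ A = 0 := by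
  rw [rank_eq_finrank_span_cols, Submodule.finrank_eq_zero, Submodule.span_eq_bot,
    Set.forall_mem_range, ← Matrix.transpose_eq_zero]
  exact funext_iff.symm

theorem rank_eq_one_iff {A : Matrix m n K} :
    A.rank = 1 ↔ ∃ (u : m → K) (v : n → K), u ≠ 0 ∧ v ≠ 0 ∧ A = vecMulVec u v := by
  constructor
  · intro h
    have hA : A ≠ 0 := fun h0 => by simp [h0] at h
    rw [rank_eq_finrank_span_cols, finrank_eq_one_iff'] at h
    obtain ⟨u, hu, hspan⟩ := h
    have hcol : ∀ j, ∃ c : K, c • (u : m → K) = A.col j := fun j => by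
      obtain ⟨c, hc⟩ := hspan ⟨A.col j, Submodule.subset_span ⟨j, rfl⟩⟩
      exact ⟨c, congrArg Subtype.val hc⟩
    choose v hv using hcol
    have hAuv : A = vecMulVec u v := by
      ext i j
      rw [vecMulVec_apply, mul_comm, ← smul_eq_mul, ← Pi.smul_apply, hv]
      rfl
    refine ⟨u, v, fun h0 => hu (Subtype.ext h0), fun h0 => hA ?_, hAuv⟩
    ext i j
    simp [hAuv, h0, vecMulVec_apply]
  · rintro ⟨u, v, hu, hv, rfl⟩
    refine le_antisymm (rank_vecMulVec_le u v) (Nat.one_le_iff_ne_zero.mpr ?_)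
    rw [Ne, rank_eq_zero_iff]
    obtain ⟨i, hi⟩ := Function.ne_iff.mp hu
    obtain ⟨j, hj⟩ := Function.ne_iff.mp hv
    exact fun h0 => mul_ne_zero hi hj congr($h0 i j)

end Matrix

theorem Fintype.prod_eq_mul_mul_prod_compl_pair {ι M : Type*} [Fintype ι] [DecidableEq ι]
    [CommMonoid M] {a b : ι} (hab : a ≠ b) (f : ι → M) :
    ∏ i, f i = f a * f b * ∏ i ∈ ({a, b} : Finset ι)ᶜ, f i := by
  rw [← Finset.prod_mul_prod_compl {a, b}, Finset.prod_pair hab]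

section Tensor

variable {N : ℕ} {I : Fin N → ℕ}

def nontrivialModes (I : Fin N → ℕ) : Finset (Fin N) :=
  Finset.univ.filter fun m => 1 < I m

@[simp]
theorem mem_nontrivialModes {m : Fin N} : m ∈ nontrivialModes I ↔ 1 < I m := by
  simp [nontrivialModes]

theorem eq_zero_of_dim_eq_zero (X : Tensor N I) {m : Fin N} (hm : I m = 0) : X = 0 :=
  funext fun i => absurd (i m).isLt (by omega)

theorem dim_pos_of_ne_zero {X : Tensor N I} (hX : X ≠ 0) (m : Fin N) : 0 < I m :=
  Nat.pos_of_ne_zero fun hm => hX (eq_zero_of_dim_eq_zero X hm)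

theorem dim_eq_one_of_notMem_nontrivialModes {X : Tensor N I} (hX : X ≠ 0) {m : Fin N}
    (hm : m ∉ nontrivialModes I) : I m = 1 := by
  have := dim_pos_of_ne_zero hX m
  rw [mem_nontrivialModes] at hm
  omega

theorem IsRankOne.ne_zero {X : Tensor N I} (hX : IsRankOne X) : X ≠ 0 := by
  obtain ⟨a, ha, hXa⟩ := hX
  choose k hk using fun n => Function.ne_iff.mp (ha n)
  intro h0
  exact Finset.prod_ne_zero_iff.mpr (fun n _ => hk n) ((hXa k).symm.trans (congr_fun h0 k))

theorem isRankOne_of_dim_eq_one {X : Tensor N I} (hX : X ≠ 0) (n₀ : Fin N)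
    (h1 : ∀ m, m ≠ n₀ → I m = 1) : IsRankOne X := by
  obtain ⟨i₀, hi₀⟩ := Function.ne_iff.mp hX
  set u : Fin (I n₀) → ℝ := fun k => X (Function.update i₀ n₀ k)
  have hXu : ∀ i, X i = u (i n₀) := fun i => congrArg X <| funext fun m => by
    by_cases hm : m = n₀
    · subst hm; simp
    · have := (i m).isLt; have := (i₀ m).isLt; have := h1 m hm
      exact Fin.ext (by rw [Function.update_of_ne hm]; omega)
  refine ⟨Function.update (fun _ _ => 1) n₀ u, fun n => ?_, fun i => ?_⟩
  · by_cases hn : n = n₀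
    · subst hn
      rw [Function.update_self]
      exact fun hu => hi₀ (by rw [hXu, hu]; rfl)
    · rw [Function.update_of_ne hn]
      exact Function.ne_iff.mpr ⟨i₀ n, one_ne_zero⟩
  · rw [Fintype.prod_eq_single n₀ fun n hn => by simp [hn], hXu]
    simp

theorem exists_twoModes_or_three_le_card (hN : 0 < N) {X : Tensor N I} (hX : X ≠ 0)
    (hX1 : ¬IsRankOne X) :
    (∃ n₁ n₂, n₁ ≠ n₂ ∧ ∀ m, m ≠ n₁ → m ≠ n₂ → I m = 1) ∨
      3 ≤ (nontrivialModes I).card := by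
  rcases (show (nontrivialModes I).card ≤ 1 ∨ (nontrivialModes I).card = 2 ∨
      3 ≤ (nontrivialModes I).card by omega) with h | h | h
  · have : Nonempty (Fin N) := ⟨⟨0, hN⟩⟩
    obtain ⟨n₀, hn₀⟩ := Finset.card_le_one_iff_subset_singleton.mp h
    refine absurd (isRankOne_of_dim_eq_one hX n₀ fun m hm => ?_) hX1
    exact dim_eq_one_of_notMem_nontrivialModes hX fun h' =>
      hm (Finset.mem_singleton.mp (hn₀ h'))
  · obtain ⟨n₁, n₂, hne, hS⟩ := Finset.card_eq_two.mp h
    exact Or.inl ⟨n₁, n₂, hne, fun m h₁ h₂ =>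
      dim_eq_one_of_notMem_nontrivialModes hX (by simp [hS, h₁, h₂])⟩
  · exact Or.inr h

theorem IsRankOne.smul (hN : 0 < N) {α : ℝ} (hα : α ≠ 0) {X : Tensor N I}
    (hX : IsRankOne X) : IsRankOne (α • X) := by
  obtain ⟨a, ha, hXa⟩ := hX
  set n₀ : Fin N := ⟨0, hN⟩
  refine ⟨Function.update a n₀ (α • a n₀), fun n => ?_, fun i => ?_⟩
  · by_cases hn : n = n₀
    · subst hn; simpa [hα] using ha n₀
    · simpa [hn] using ha n
  · rw [Pi.smul_apply, hXa, Fintype.prod_eq_mul_prod_compl n₀,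
      Fintype.prod_eq_mul_prod_compl n₀, Function.update_self, Pi.smul_apply, smul_eq_mul,
      smul_eq_mul, mul_assoc]
    congr 2
    exact Finset.prod_congr rfl fun n hn => by rw [Function.update_of_ne (by simpa using hn)]

theorem isRankOne_smul_iff (hN : 0 < N) {α : ℝ} (hα : α ≠ 0) {X : Tensor N I} :
    IsRankOne (α • X) ↔ IsRankOne X :=
  ⟨fun h => by simpa [smul_smul, inv_mul_cancel₀ hα] using h.smul hN (inv_ne_zero hα),
    fun h => h.smul hN hα⟩

theorem isRankOne_idTensor_one (N : ℕ) : IsRankOne (idTensor 1 N) :=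
  ⟨fun _ _ => 1, fun _ => Function.ne_iff.mpr ⟨0, one_ne_zero⟩, fun i => by
    rw [idTensor, if_pos fun n m => Subsingleton.elim (α := Fin 1) (i n) (i m)]
    simp⟩

theorem idTensor_ne_zero {M : ℕ} (hM : 0 < M) : idTensor M N ≠ 0 := fun h => by
  simpa [idTensor] using congr_fun h fun _ => ⟨0, hM⟩

theorem not_isRankOne_idTensor {M : ℕ} (hM : 2 ≤ M) (hN : 2 ≤ N) :
    ¬IsRankOne (idTensor M N) := by
  rintro ⟨a, -, hXa⟩
  have hdiag : ∀ j n, a n j ≠ 0 := fun j n h0 => by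
    have := hXa fun _ => j
    rw [idTensor, if_pos fun _ _ => rfl, Finset.prod_eq_zero (Finset.mem_univ n) h0] at this
    exact one_ne_zero this
  have hoff := hXa fun n => if n = ⟨0, by omega⟩ then (⟨0, by omega⟩ : Fin M) else ⟨1, hM⟩
  rw [idTensor, if_neg fun hall => by simpa using hall ⟨0, by omega⟩ ⟨1, hN⟩] at hoff
  exact Finset.prod_ne_zero_iff.mpr (fun n _ => hdiag _ n) hoff.symm

section TwoModes

variable {n₁ n₂ : Fin N}

def twoModeIndex (h1 : ∀ m, m ≠ n₁ → m ≠ n₂ → I m = 1) (p : Fin (I n₁)) (q : Fin (I n₂)) :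
    (m : Fin N) → Fin (I m) :=
  fun m =>
    if h : m = n₁ then Fin.cast (congrArg I h.symm) p
    else if h' : m = n₂ then Fin.cast (congrArg I h'.symm) q
    else Fin.cast (h1 m h h').symm 0

theorem isRankOne_iff_exists_mul (h1 : ∀ m, m ≠ n₁ → m ≠ n₂ → I m = 1) (hne : n₁ ≠ n₂)
    {X : Tensor N I} :
    IsRankOne X ↔ ∃ (u : Fin (I n₁) → ℝ) (v : Fin (I n₂) → ℝ),
      u ≠ 0 ∧ v ≠ 0 ∧ ∀ i, X i = u (i n₁) * v (i n₂) := by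
  constructor
  · intro hX
    obtain ⟨i₀, hi₀⟩ := Function.ne_iff.mp hX.ne_zero
    obtain ⟨a, ha, hXa⟩ := hX
    -- the modes other than `n₁, n₂` have a single index, so they contribute a constant factor
    set c := ∏ m ∈ ({n₁, n₂} : Finset (Fin N))ᶜ, a m (i₀ m)
    have hXc : ∀ i, X i = a n₁ (i n₁) * a n₂ (i n₂) * c := fun i => by
      rw [hXa, Fintype.prod_eq_mul_mul_prod_compl_pair hne]
      congr 1
      refine Finset.prod_congr rfl fun m hm => congrArg (a m) (Fin.ext ?_)
      simp only [Finset.mem_compl, Finset.mem_insert, Finset.mem_singleton, not_or] at hm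
      have := (i m).isLt; have := (i₀ m).isLt; have := h1 m hm.1 hm.2
      omega
    have hc : c ≠ 0 := right_ne_zero_of_mul (hXc i₀ ▸ hi₀)
    refine ⟨a n₁, c • a n₂, ha n₁, smul_ne_zero hc (ha n₂), fun i => ?_⟩
    rw [hXc, Pi.smul_apply, smul_eq_mul]
    ring
  · rintro ⟨u, v, hu, hv, hX⟩
    refine ⟨Function.update (Function.update (fun _ _ => 1) n₁ u) n₂ v, fun n => ?_,
      fun i => ?_⟩
    · by_cases h₂ : n = n₂
      · subst h₂; simpa using hv
      by_cases h₁ : n = n₁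
      · subst h₁; simpa [h₂] using hu
      rw [Function.update_of_ne h₂, Function.update_of_ne h₁]
      exact Function.ne_iff.mpr ⟨Fin.cast (h1 n h₁ h₂).symm 0, one_ne_zero⟩
    · rw [hX, Fintype.prod_eq_mul_mul_prod_compl_pair hne, Finset.prod_eq_one fun m hm => ?_]
      · simp [hne]
      · simp only [Finset.mem_compl, Finset.mem_insert, Finset.mem_singleton, not_or] at hm
        simp [hm.1, hm.2]

variable {h1 : ∀ m, m ≠ n₁ → m ≠ n₂ → I m = 1}

theorem twoModeMatrix_apply (X : Tensor N I) (p : Fin (I n₁)) (q : Fin (I n₂)) :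
    twoModeMatrix X n₁ n₂ h1 p q = X (twoModeIndex h1 p q) :=
  rfl

theorem twoModeIndex_apply_self (i : (n : Fin N) → Fin (I n)) :
    twoModeIndex h1 (i n₁) (i n₂) = i := by
  funext m
  unfold twoModeIndex
  split_ifs with h h'
  · subst h; rfl
  · subst h'; rfl
  · have := (i m).isLt; have := h1 m h h'
    exact Fin.ext (by rw [Fin.val_cast, Fin.val_zero]; omega)

theorem twoModeIndex_left (p : Fin (I n₁)) (q : Fin (I n₂)) :
    twoModeIndex h1 p q n₁ = p := by
  simp [twoModeIndex]

theorem twoModeIndex_right (hne : n₁ ≠ n₂) (p : Fin (I n₁)) (q : Fin (I n₂)) :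
    twoModeIndex h1 p q n₂ = q := by
  simp [twoModeIndex, hne.symm]

theorem twoModeMatrix_apply_self (X : Tensor N I) (i : (n : Fin N) → Fin (I n)) :
    twoModeMatrix X n₁ n₂ h1 (i n₁) (i n₂) = X i := by
  rw [twoModeMatrix_apply, twoModeIndex_apply_self]

theorem twoModeMatrix_eq_iff (hne : n₁ ≠ n₂) {X : Tensor N I}
    {A : Matrix (Fin (I n₁)) (Fin (I n₂)) ℝ} :
    twoModeMatrix X n₁ n₂ h1 = A ↔ ∀ i, X i = A (i n₁) (i n₂) := by
  constructor
  · rintro rfl i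
    exact (twoModeMatrix_apply_self X i).symm
  · intro h
    ext p q
    rw [twoModeMatrix_apply, h, twoModeIndex_left, twoModeIndex_right hne]

theorem twoModeMatrix_eq_zero_iff (hne : n₁ ≠ n₂) {X : Tensor N I} :
    twoModeMatrix X n₁ n₂ h1 = 0 ↔ X = 0 := by
  rw [twoModeMatrix_eq_iff hne, funext_iff]
  rfl

theorem isRankOne_iff_rank_twoModeMatrix_eq_one (hne : n₁ ≠ n₂) {X : Tensor N I} :
    IsRankOne X ↔ (twoModeMatrix X n₁ n₂ h1).rank = 1 := by
  simp only [isRankOne_iff_exists_mul h1 hne, Matrix.rank_eq_one_iff, twoModeMatrix_eq_iff hne,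
    Matrix.vecMulVec_apply]

theorem one_lt_dim_of_not_isRankOne (h1 : ∀ m, m ≠ n₁ → m ≠ n₂ → I m = 1) (hne : n₁ ≠ n₂)
    {X : Tensor N I} (hX : X ≠ 0) (hX1 : ¬IsRankOne X) : 1 < I n₁ ∧ 1 < I n₂ := by
  rw [isRankOne_iff_rank_twoModeMatrix_eq_one (h1 := h1) hne] at hX1
  have h0 : (twoModeMatrix X n₁ n₂ h1).rank ≠ 0 := by
    rwa [Ne, Matrix.rank_eq_zero_iff, twoModeMatrix_eq_zero_iff hne]
  have hrow := (twoModeMatrix X n₁ n₂ h1).rank_le_card_height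
  have hcol := (twoModeMatrix X n₁ n₂ h1).rank_le_card_width
  rw [Fintype.card_fin] at hrow hcol
  omega

end TwoModes

theorem twoModeMatrix_idTensor {M : ℕ} (h1 : ∀ m : Fin 2, m ≠ 0 → m ≠ 1 → M = 1) :
    twoModeMatrix (idTensor M 2) 0 1 h1 = 1 := by
  rw [twoModeMatrix_eq_iff zero_ne_one]
  intro i
  simp [idTensor, Matrix.one_apply, Fin.forall_fin_two, eq_comm]

end Tensor

section Permute

variable {N : ℕ} {I : Fin N → ℕ} (π : Equiv.Perm (Fin N))

theorem permute_apply_comp (X : Tensor N I) (i : (n : Fin N) → Fin (I n)) :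
    permute I π X (fun m => i (π m)) = X i :=
  congrArg X <| funext fun n => Fin.ext <| congrArg (fun k => (i k : ℕ)) (π.apply_symm_apply n)

theorem permute_eq_zero_iff {X : Tensor N I} : permute I π X = 0 ↔ X = 0 :=
  ⟨fun h => funext fun i => (permute_apply_comp π X i).symm.trans (congr_fun h _),
    fun h => h ▸ rfl⟩

theorem isRankOne_permute_iff {X : Tensor N I} : IsRankOne (permute I π X) ↔ IsRankOne X := by
  constructor
  · rintro ⟨b, hb, hXb⟩
    refine ⟨fun n k => b (π.symm n) (Fin.cast (congrArg I (π.apply_symm_apply n).symm) k),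
      fun n h0 => hb (π.symm n) (funext fun k => ?_), fun i => ?_⟩
    · simpa using congr_fun h0 (Fin.cast (congrArg I (π.apply_symm_apply n)) k)
    · rw [← permute_apply_comp π X i, hXb, ← Equiv.prod_comp π.symm]
      refine Finset.prod_congr rfl fun n _ => congrArg (b (π.symm n)) (Fin.ext ?_)
      exact congrArg (fun k => (i k : ℕ)) (π.apply_symm_apply n)
  · rintro ⟨a, ha, hXa⟩
    refine ⟨fun m => a (π m), fun m => ha (π m), fun i => ?_⟩
    rw [permute, hXa, ← Equiv.prod_comp π]
    refine Finset.prod_congr rfl fun m _ => congrArg (a (π m)) (Fin.ext ?_)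
    exact congrArg (fun k => (i k : ℕ)) (π.symm_apply_apply m)

theorem card_nontrivialModes_comp_perm :
    (nontrivialModes fun m => I (π m)).card = (nontrivialModes I).card :=
  Finset.card_equiv π (by simp)

theorem sup_comp_perm : (Finset.univ.sup fun m => I (π m)) = Finset.univ.sup I := by
  conv_rhs => rw [← Finset.map_univ_equiv π, Finset.sup_map]
  rfl

theorem twoModeMatrix_permute {n₁ n₂ : Fin N} (hne : n₁ ≠ n₂)
    (h1 : ∀ m, m ≠ n₁ → m ≠ n₂ → I m = 1)
    (h1' : ∀ m, m ≠ π.symm n₁ → m ≠ π.symm n₂ → I (π m) = 1) (X : Tensor N I) :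
    twoModeMatrix (permute I π X) (π.symm n₁) (π.symm n₂) h1' =
      (twoModeMatrix X n₁ n₂ h1).submatrix (finCongr (congrArg I (π.apply_symm_apply n₁)))
        (finCongr (congrArg I (π.apply_symm_apply n₂))) := by
  rw [twoModeMatrix_eq_iff (π.symm.injective.ne hne)]
  exact fun i => (twoModeMatrix_apply_self (h1 := h1) X _).symm

end Permute

section Subtensor

variable {N : ℕ} {I J : Fin N → ℕ} {Y : Tensor N J} {X : Tensor N I}

theorem IsSubtensor.dim_le (hYX : IsSubtensor Y X) (n : Fin N) : J n ≤ I n := by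
  obtain ⟨f, hf, -⟩ := hYX
  simpa using Fintype.card_le_of_injective _ (hf n).injective

theorem IsSubtensor.ne_zero (hYX : IsSubtensor Y X) (hY : Y ≠ 0) : X ≠ 0 := by
  obtain ⟨f, -, hYf⟩ := hYX
  rintro rfl
  exact hY (funext fun i => hYf i)

theorem IsSubtensor.isRankOne (hYX : IsSubtensor Y X) (hY : Y ≠ 0) (hX : IsRankOne X) :
    IsRankOne Y := by
  obtain ⟨f, -, hYf⟩ := hYX
  obtain ⟨a, -, hXa⟩ := hX
  refine ⟨fun n k => a n (f n k), fun n h0 => hY (funext fun i => ?_),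
    fun i => by rw [hYf, hXa]⟩
  rw [hYf, hXa]
  exact Finset.prod_eq_zero (Finset.mem_univ n) (congr_fun h0 (i n))

theorem IsSubtensor.nontrivialModes_subset (hYX : IsSubtensor Y X) :
    nontrivialModes J ⊆ nontrivialModes I := fun m hm => by
  rw [mem_nontrivialModes] at hm ⊢
  exact hm.trans_le (hYX.dim_le m)

theorem IsSubtensor.exists_twoModeMatrix_eq_submatrix (hYX : IsSubtensor Y X)
    {n₁ n₂ : Fin N} (hne : n₁ ≠ n₂) (hJ : ∀ m, m ≠ n₁ → m ≠ n₂ → J m = 1)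
    (hI : ∀ m, m ≠ n₁ → m ≠ n₂ → I m = 1) :
    ∃ (f₁ : Fin (J n₁) → Fin (I n₁)) (f₂ : Fin (J n₂) → Fin (I n₂)),
      twoModeMatrix Y n₁ n₂ hJ = (twoModeMatrix X n₁ n₂ hI).submatrix f₁ f₂ := by
  obtain ⟨f, -, hYf⟩ := hYX
  refine ⟨f n₁, f n₂, (twoModeMatrix_eq_iff hne).mpr fun i => ?_⟩
  rw [hYf, Matrix.submatrix_apply, twoModeMatrix_apply_self X fun n => f n (i n)]

theorem IsSubtensor.three_le_card_nontrivialModes (hYX : IsSubtensor Y X) {n₁ n₂ : Fin N}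
    (hne : n₁ ≠ n₂) (hJ : ∀ m, m ≠ n₁ → m ≠ n₂ → J m = 1) (hY : Y ≠ 0) (hY1 : ¬IsRankOne Y)
    (hI : ¬∀ m, m ≠ n₁ → m ≠ n₂ → I m = 1) : 3 ≤ (nontrivialModes I).card := by
  push Not at hI
  obtain ⟨m, hm₁, hm₂, hm⟩ := hI
  obtain ⟨hJ₁, hJ₂⟩ := one_lt_dim_of_not_isRankOne hJ hne hY hY1
  rw [← (Finset.card_eq_three.mpr ⟨n₁, n₂, m, hne, hm₁.symm, hm₂.symm, rfl⟩)]
  refine Finset.card_le_card fun k hk => ?_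
  simp only [Finset.mem_insert, Finset.mem_singleton] at hk
  rw [mem_nontrivialModes]
  rcases hk with rfl | rfl | rfl
  · exact hJ₁.trans_le (hYX.dim_le _)
  · exact hJ₂.trans_le (hYX.dim_le _)
  · have := dim_pos_of_ne_zero (hYX.ne_zero hY) k
    omega

end Subtensor

structure IsMatrixRankOrMaxDim (r : RankFun) : Prop where
  apply_of_eq_zero : ∀ (N : ℕ) (I : Fin N → ℕ) (X : Tensor N I), X = 0 → r N I X = 0
  apply_of_isRankOne : ∀ (N : ℕ) (I : Fin N → ℕ) (X : Tensor N I), IsRankOne X → r N I X = 1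
  apply_of_twoModes : ∀ (N : ℕ) (I : Fin N → ℕ) (X : Tensor N I) (n₁ n₂ : Fin N),
    n₁ ≠ n₂ → 1 < I n₁ → 1 < I n₂ →
    ∀ h1 : (∀ m, m ≠ n₁ → m ≠ n₂ → I m = 1),
      X ≠ 0 → ¬ IsRankOne X → r N I X = (twoModeMatrix X n₁ n₂ h1).rank
  apply_of_three_le_card : ∀ (N : ℕ) (I : Fin N → ℕ) (X : Tensor N I),
    X ≠ 0 → ¬ IsRankOne X → 3 ≤ (nontrivialModes I).card → r N I X = Finset.univ.sup I

namespace IsMatrixRankOrMaxDim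

variable {r : RankFun} (h : IsMatrixRankOrMaxDim r) {N : ℕ} {I : Fin N → ℕ}
include h

theorem apply_eq_rank_twoModeMatrix {n₁ n₂ : Fin N} (hne : n₁ ≠ n₂)
    (h1 : ∀ m, m ≠ n₁ → m ≠ n₂ → I m = 1) (X : Tensor N I) :
    r N I X = (twoModeMatrix X n₁ n₂ h1).rank := by
  by_cases hX : X = 0
  · rw [h.apply_of_eq_zero N I X hX, (twoModeMatrix_eq_zero_iff hne).mpr hX, Matrix.rank_zero]
  by_cases hX1 : IsRankOne X
  · rw [h.apply_of_isRankOne N I X hX1, (isRankOne_iff_rank_twoModeMatrix_eq_one hne).mp hX1]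
  obtain ⟨h₁, h₂⟩ := one_lt_dim_of_not_isRankOne h1 hne hX hX1
  exact h.apply_of_twoModes N I X n₁ n₂ hne h₁ h₂ h1 hX hX1

theorem two_le_apply (hN : 0 < N) {X : Tensor N I} (hX : X ≠ 0) (hX1 : ¬IsRankOne X) :
    2 ≤ r N I X := by
  rcases exists_twoModes_or_three_le_card hN hX hX1 with ⟨n₁, n₂, hne, h1⟩ | h3
  · rw [h.apply_eq_rank_twoModeMatrix hne h1]
    have hrank₀ : (twoModeMatrix X n₁ n₂ h1).rank ≠ 0 := by
      rwa [Ne, Matrix.rank_eq_zero_iff, twoModeMatrix_eq_zero_iff hne]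
    have hrank₁ : (twoModeMatrix X n₁ n₂ h1).rank ≠ 1 :=
      fun h' => hX1 ((isRankOne_iff_rank_twoModeMatrix_eq_one hne).mpr h')
    omega
  · rw [h.apply_of_three_le_card N I X hX hX1 h3]
    obtain ⟨m, hm⟩ := Finset.card_pos.mp (by omega : 0 < (nontrivialModes I).card)
    exact (mem_nontrivialModes.mp hm).trans_le (Finset.le_sup (Finset.mem_univ m))

theorem apply_eq_zero_iff (hN : 0 < N) (X : Tensor N I) : r N I X = 0 ↔ X = 0 := by
  refine ⟨fun h0 => ?_, h.apply_of_eq_zero N I X⟩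
  by_contra hX
  by_cases hX1 : IsRankOne X
  · rw [h.apply_of_isRankOne N I X hX1] at h0
    exact one_ne_zero h0
  · have := h.two_le_apply hN hX hX1
    omega

theorem apply_eq_one_iff (hN : 0 < N) (X : Tensor N I) : r N I X = 1 ↔ IsRankOne X := by
  refine ⟨fun hr => ?_, h.apply_of_isRankOne N I X⟩
  by_contra hX1
  have hX : X ≠ 0 := fun hX => by rw [h.apply_of_eq_zero N I X hX] at hr; exact zero_ne_one hr
  have := h.two_le_apply hN hX hX1
  omega

theorem apply_idTensor (M : ℕ) (hN : 2 ≤ N) : r N (fun _ => M) (idTensor M N) = M := by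
  rcases (show M = 0 ∨ M = 1 ∨ 2 ≤ M by omega) with rfl | rfl | hM
  · exact h.apply_of_eq_zero _ _ _ (eq_zero_of_dim_eq_zero _ (m := ⟨0, by omega⟩) rfl)
  · exact h.apply_of_isRankOne _ _ _ (isRankOne_idTensor_one N)
  rcases hN.eq_or_lt with rfl | hN
  · have h1 : ∀ m : Fin 2, m ≠ 0 → m ≠ 1 → M = 1 := fun m h₀ h₁ => by
      fin_cases m <;> simp_all
    rw [h.apply_eq_rank_twoModeMatrix zero_ne_one h1, twoModeMatrix_idTensor, Matrix.rank_one,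
      Fintype.card_fin]
  · have hcard : (nontrivialModes fun _ : Fin N => M).card = N := by
      simp [nontrivialModes, show 1 < M by omega]
    rw [h.apply_of_three_le_card _ _ _ (idTensor_ne_zero (by omega))
      (not_isRankOne_idTensor hM (by omega)) (by omega),
      Finset.sup_const ⟨⟨0, by omega⟩, Finset.mem_univ _⟩]

theorem apply_eq_rank_assocMatrix (h2 : 2 ≤ N) (h1 : ∀ n : Fin N, 2 ≤ n.val → I n = 1)
    (X : Tensor N I) : r N I X = (assocMatrix h2 h1 X).rank :=
  h.apply_eq_rank_twoModeMatrix (n₁ := ⟨0, by omega⟩) (n₂ := ⟨1, by omega⟩) (by simp)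
    (fun m h₀ h₁ => h1 m (by simp only [Ne, Fin.ext_iff] at h₀ h₁; omega)) X

theorem apply_smul (hN : 0 < N) {α : ℝ} (hα : α ≠ 0) (X : Tensor N I) :
    r N I (α • X) = r N I X := by
  by_cases hX : X = 0
  · rw [hX, smul_zero]
  by_cases hX1 : IsRankOne X
  · rw [h.apply_of_isRankOne N I X hX1,
      h.apply_of_isRankOne N I _ ((isRankOne_smul_iff hN hα).mpr hX1)]
  rcases exists_twoModes_or_three_le_card hN hX hX1 with ⟨n₁, n₂, hne, h1⟩ | h3
  · rw [h.apply_eq_rank_twoModeMatrix hne h1, h.apply_eq_rank_twoModeMatrix hne h1,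
      show twoModeMatrix (α • X) n₁ n₂ h1 = α • twoModeMatrix X n₁ n₂ h1 from rfl,
      Matrix.rank_smul_of_mem_nonZeroDivisors _ (mem_nonZeroDivisors_of_ne_zero hα)]
  · rw [h.apply_of_three_le_card N I X hX hX1 h3, h.apply_of_three_le_card N I _
      ((smul_ne_zero_iff_right hα).mpr hX) ((isRankOne_smul_iff hN hα).not.mpr hX1) h3]

theorem apply_permute (hN : 0 < N) (π : Equiv.Perm (Fin N)) (X : Tensor N I) :
    r N (fun m => I (π m)) (permute I π X) = r N I X := by
  by_cases hX : X = 0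
  · rw [h.apply_of_eq_zero N I X hX, h.apply_of_eq_zero _ _ _ ((permute_eq_zero_iff π).mpr hX)]
  by_cases hX1 : IsRankOne X
  · rw [h.apply_of_isRankOne N I X hX1,
      h.apply_of_isRankOne _ _ _ ((isRankOne_permute_iff π).mpr hX1)]
  rcases exists_twoModes_or_three_le_card hN hX hX1 with ⟨n₁, n₂, hne, h1⟩ | h3
  · have h1' : ∀ m, m ≠ π.symm n₁ → m ≠ π.symm n₂ → I (π m) = 1 := fun m h₁ h₂ =>
      h1 (π m) (by rwa [Ne, ← π.eq_symm_apply]) (by rwa [Ne, ← π.eq_symm_apply])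
    rw [h.apply_eq_rank_twoModeMatrix (π.symm.injective.ne hne) h1',
      twoModeMatrix_permute π hne h1, Matrix.rank_submatrix, h.apply_eq_rank_twoModeMatrix hne h1]
  · rw [h.apply_of_three_le_card N I X hX hX1 h3, h.apply_of_three_le_card _ _ _
      ((permute_eq_zero_iff π).not.mpr hX) ((isRankOne_permute_iff π).not.mpr hX1)
      ((card_nontrivialModes_comp_perm π).symm ▸ h3), sup_comp_perm]

theorem apply_le_of_isSubtensor (hN : 0 < N) {J : Fin N → ℕ} {X : Tensor N I} {Y : Tensor N J}
    (hYX : IsSubtensor Y X) : r N J Y ≤ r N I X := by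
  by_cases hY : Y = 0
  · simp [h.apply_of_eq_zero N J Y hY]
  have hX := hYX.ne_zero hY
  by_cases hY1 : IsRankOne Y
  · rw [h.apply_of_isRankOne N J Y hY1, Nat.one_le_iff_ne_zero, Ne, h.apply_eq_zero_iff hN]
    exact hX
  have hX1 : ¬IsRankOne X := fun hX1 => hY1 (hYX.isRankOne hY hX1)
  rcases exists_twoModes_or_three_le_card hN hY hY1 with ⟨n₁, n₂, hne, hJ⟩ | h3
  · rw [h.apply_eq_rank_twoModeMatrix hne hJ]
    by_cases hI : ∀ m, m ≠ n₁ → m ≠ n₂ → I m = 1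
    · obtain ⟨f₁, f₂, hYf⟩ := hYX.exists_twoModeMatrix_eq_submatrix hne hJ hI
      rw [h.apply_eq_rank_twoModeMatrix hne hI, hYf]
      exact Matrix.rank_submatrix_le _ _ _
    rw [h.apply_of_three_le_card N I X hX hX1
      (hYX.three_le_card_nontrivialModes hne hJ hY hY1 hI)]
    calc (twoModeMatrix Y n₁ n₂ hJ).rank ≤ J n₁ := by
          simpa using (twoModeMatrix Y n₁ n₂ hJ).rank_le_card_height
      _ ≤ I n₁ := hYX.dim_le n₁
      _ ≤ Finset.univ.sup I := Finset.le_sup (Finset.mem_univ n₁)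
  · rw [h.apply_of_three_le_card N J Y hY hY1 h3, h.apply_of_three_le_card N I X hX hX1
      (h3.trans (Finset.card_le_card hYX.nontrivialModes_subset))]
    exact Finset.sup_mono_fun fun n _ => hYX.dim_le n

end IsMatrixRankOrMaxDim

/-- Any function `r` with: `r 0 = 0`; `r X = 1` for rank-one `X`; `r X` = the
rank of the associated matrix when exactly two modes of `X` have dimension
`> 1`; and `r X = max {I₁, …, I_N}` when at least three modes have dimension
`> 1`, is a QZC rank function. -/
theorem isQZCRankFn_add0 (r : RankFun)
    (hzero : ∀ (N : ℕ) (I : Fin N → ℕ) (X : Tensor N I), X = 0 → r N I X = 0)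
    (hone : ∀ (N : ℕ) (I : Fin N → ℕ) (X : Tensor N I), IsRankOne X → r N I X = 1)
    (htwo : ∀ (N : ℕ) (I : Fin N → ℕ) (X : Tensor N I) (n₁ n₂ : Fin N),
      n₁ ≠ n₂ → 1 < I n₁ → 1 < I n₂ →
      ∀ h1 : (∀ m, m ≠ n₁ → m ≠ n₂ → I m = 1),
        X ≠ 0 → ¬ IsRankOne X → r N I X = (twoModeMatrix X n₁ n₂ h1).rank)
    (hthree : ∀ (N : ℕ) (I : Fin N → ℕ) (X : Tensor N I),
      X ≠ 0 → ¬ IsRankOne X →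
      3 ≤ (Finset.univ.filter fun m : Fin N => 1 < I m).card →
      r N I X = Finset.univ.sup I) :
    IsQZCRankFn r := by
  have h : IsMatrixRankOrMaxDim r := ⟨hzero, hone, htwo, hthree⟩
  exact
    { zero_iff := fun _ hN _ => h.apply_eq_zero_iff hN
      one_iff := fun _ hN _ => h.apply_eq_one_iff hN
      id_eq := fun M _ hN => h.apply_idTensor M hN
      matrix_eq := fun _ h2 _ h1 => h.apply_eq_rank_assocMatrix h2 h1
      smul_eq := fun _ hN _ _ hα => h.apply_smul hN hα
      perm_eq := fun _ hN _ π => h.apply_permute hN π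
      subtensor_le := fun _ hN _ _ _ _ hYX => h.apply_le_of_isSubtensor hN hYX }
end
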